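/- (Flat-space version of Lemma 1.) Let H, σ : ℝ³ → M₃(ℝ) be smooth symmetric trace-free matrix fields and ω, a : ℝ³ → ℝ³ smooth vector fields satisfying pointwise the purely magnetic equations [σ,H] = 3Hω, div H = 0, curl H = −2 a∧H, and H = curl σ + (Dω)^ + 2 a⊗̂ω. Then pointwise (1/4) Tr H² = ⟨H, Dω + 2 a⊗ω⟩ = (1/3) ⟨H, curl σ⟩. -/

import Mathlib

open Matrix BigOperators
open scoped RealInnerProductSpace

noncomputable section

/-- Vectors in ℝ³. -/
abbrev V3 := Fin 3 → ℝ

/-- 3×3 real matrices. -/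
abbrev M3 := Matrix (Fin 3) (Fin 3) ℝ

/-- The Levi-Civita symbol on three indices. -/
def eps (a b c : Fin 3) : ℝ :=
  if (a, b, c) = (0, 1, 2) ∨ (a, b, c) = (1, 2, 0) ∨ (a, b, c) = (2, 0, 1) then 1
  else if (a, b, c) = (0, 2, 1) ∨ (a, b, c) = (2, 1, 0) ∨ (a, b, c) = (1, 0, 2) then -1
  else 0

/-- The Frobenius inner product ⟨A,B⟩ = Σ_{i,j} A_{ij} B_{ij}. -/
def frob (A B : M3) : ℝ := ∑ i, ∑ j, A i j * B i j

/-- The Euclidean inner product on ℝ³. -/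
def dot3 (v w : V3) : ℝ := ∑ a, v a * w a

/-- The generalized vector product of two 3×3 matrices:
    [A,B]_a = Σ_{b,c} ε_{abc} (AB)_{bc}. -/
def mcross (A B : M3) : V3 := fun a => ∑ b, ∑ c, eps a b c * (A * B) b c

/-- v ∧ B : (v∧B)_{ab} = ½ Σ_{c,d} (ε_{acd} v_c B_{db} + ε_{bcd} v_c B_{da}). -/
def vwedge (v : V3) (B : M3) : M3 := fun a b =>
  (1 / 2 : ℝ) * ∑ c, ∑ d, (eps a c d * v c * B d b + eps b c d * v c * B d a)

/-- The tensor product (a⊗ω)_{ij} = a_i ω_j. -/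
def tens (a ω : V3) : M3 := fun i j => a i * ω j

/-- The trace-free symmetric part X^ = ½(X+Xᵀ) − (1/3)(Tr X)·I. -/
def hat (X : M3) : M3 := (1 / 2 : ℝ) • (X + Xᵀ) - ((1 / 3 : ℝ) * X.trace) • (1 : M3)

/-- The partial derivative ∂_c f at x of a scalar field f : ℝ³ → ℝ. -/
def pd (c : Fin 3) (f : V3 → ℝ) (x : V3) : ℝ := fderiv ℝ f x (Pi.single c 1)

/-- The curl of a matrix field:
    (curl A)_{ab} = ½ Σ_{c,d} (ε_{acd} ∂_c A_{db} + ε_{bcd} ∂_c A_{da}). -/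
def curlM (A : V3 → M3) (x : V3) : M3 := fun a b =>
  (1 / 2 : ℝ) * ∑ c, ∑ d,
    (eps a c d * pd c (fun y => A y d b) x + eps b c d * pd c (fun y => A y d a) x)

/-- The divergence of a vector field: div w = Σ_a ∂_a w_a. -/
def divV (w : V3 → V3) (x : V3) : ℝ := ∑ a, pd a (fun y => w y a) x

/-- The divergence of a matrix field: (div A)_b = Σ_a ∂_a A_{ab}. -/
def divM (A : V3 → M3) (x : V3) : V3 := fun b => ∑ a, pd a (fun y => A y a b) x

/-- The Jacobian matrix field (Dw)_{ab} = ∂_a w_b. -/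
def jac (w : V3 → V3) (x : V3) : M3 := fun a b => pd a (fun y => w y b) x

lemma pd_sum' {ι : Type} (s : Finset ι) (f : ι → V3 → ℝ) (c : Fin 3) (x : V3)
    (h : ∀ i ∈ s, DifferentiableAt ℝ (f i) x) :
    pd c (fun y => ∑ i ∈ s, f i y) x = ∑ i ∈ s, pd c (f i) x := by
  unfold pd; rw [fderiv_fun_sum h]; simp

lemma pd_mul' (f g : V3 → ℝ) (c : Fin 3) (x : V3) (hf : DifferentiableAt ℝ f x)
    (hg : DifferentiableAt ℝ g x) :
    pd c (fun y => f y * g y) x = pd c f x * g x + f x * pd c g x := by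
  unfold pd; rw [fderiv_fun_mul hf hg]; simp; ring

lemma pd_const_mul' (r : ℝ) (f : V3 → ℝ) (c : Fin 3) (x : V3) (hf : DifferentiableAt ℝ f x) :
    pd c (fun y => r * f y) x = r * pd c f x := by
  unfold pd; rw [fderiv_const_mul hf]; simp

set_option maxHeartbeats 4000000 in
/-- flat-space version of Lemma 1: under the purely magnetic
    equations, ¼ Tr H² = ⟨H, Dω + 2 a⊗ω⟩ = ⅓ ⟨H, curl σ⟩. -/
theorem stmt_7 (H σ : V3 → M3) (ω a : V3 → V3)
    (hH : ∀ i j, ContDiff ℝ (⊤ : ℕ∞) fun x => H x i j)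
    (hσ : ∀ i j, ContDiff ℝ (⊤ : ℕ∞) fun x => σ x i j)
    (hω : ∀ i, ContDiff ℝ (⊤ : ℕ∞) fun x => ω x i)
    (ha : ∀ i, ContDiff ℝ (⊤ : ℕ∞) fun x => a x i)
    (hHsym : ∀ x, (H x)ᵀ = H x) (hHtf : ∀ x, (H x).trace = 0)
    (hσsym : ∀ x, (σ x)ᵀ = σ x) (hσtf : ∀ x, (σ x).trace = 0)
    (hbi1 : ∀ x, mcross (σ x) (H x) = (3 : ℝ) • (H x).mulVec (ω x))
    (hbi2 : ∀ x, divM H x = 0)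
    (hbi3 : ∀ x, curlM H x = -(2 : ℝ) • vwedge (a x) (H x))
    (hRicci : ∀ x, H x = curlM σ x + hat (jac ω x) + (2 : ℝ) • hat (tens (a x) (ω x))) :
    ∀ x, (1 / 4 : ℝ) * (H x * H x).trace
        = frob (H x) (jac ω x + (2 : ℝ) • tens (a x) (ω x))
      ∧ frob (H x) (jac ω x + (2 : ℝ) • tens (a x) (ω x))
        = (1 / 3 : ℝ) * frob (H x) (curlM σ x) := by
  intro x
  -- differentiability facts
  have hHd : ∀ i j, Differentiable ℝ fun y => H y i j := fun i j => (hH i j).differentiable (by simp)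
  have hσd : ∀ i j, Differentiable ℝ fun y => σ y i j := fun i j => (hσ i j).differentiable (by simp)
  have hωd : ∀ i, Differentiable ℝ fun y => ω y i := fun i => (hω i).differentiable (by simp)
  -- entry symmetry facts
  have eH : ∀ i j, H x j i = H x i j := fun i j => congrFun (congrFun (hHsym x) i) j
  have eσ : ∀ i j, σ x j i = σ x i j := fun i j => congrFun (congrFun (hσsym x) i) j
  have eH10 := eH 0 1
  have eH20 := eH 0 2
  have eH21 := eH 1 2
  have eσ10 := eσ 0 1
  have eσ20 := eσ 0 2
  have eσ21 := eσ 1 2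
  have eH22 : H x 2 2 = -H x 0 0 - H x 1 1 := by
    have := hHtf x
    simp [Matrix.trace, Matrix.diag, Fin.sum_univ_three] at this
    linarith
  have eσ22 : σ x 2 2 = -σ x 0 0 - σ x 1 1 := by
    have := hσtf x
    simp [Matrix.trace, Matrix.diag, Fin.sum_univ_three] at this
    linarith
  have fH : ∀ i j, (fun y => H y j i) = fun y => H y i j :=
    fun i j => funext fun y => congrFun (congrFun (hHsym y) i) j
  have fσ : ∀ i j, (fun y => σ y j i) = fun y => σ y i j :=
    fun i j => funext fun y => congrFun (congrFun (hσsym y) i) j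
  have fH10 := fH 0 1
  have fH20 := fH 0 2
  have fH21 := fH 1 2
  have fσ10 := fσ 0 1
  have fσ20 := fσ 0 2
  have fσ21 := fσ 1 2
  -- expansion of the divergence of the matrix cross product
  have hd1 : ∀ b c : Fin 3, DifferentiableAt ℝ (fun y => ∑ k, σ y b k * H y k c) x :=
    fun b c => (DifferentiableAt.fun_sum fun k _ => ((hσd b k).mul (hHd k c)).differentiableAt)
  have keyL : divV (fun y => mcross (σ y) (H y)) x
      = ∑ a', ∑ b, ∑ c, eps a' b c * ∑ k, (pd a' (fun y => σ y b k) x * H x k c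
          + σ x b k * pd a' (fun y => H y k c) x) := by
    simp only [divV]
    refine Finset.sum_congr rfl fun a' _ => ?_
    have h1 : (fun y => mcross (σ y) (H y) a')
        = fun y => ∑ b, ∑ c, eps a' b c * ∑ k, σ y b k * H y k c := by
      funext y; simp [mcross, Matrix.mul_apply]
    rw [h1, pd_sum' _ _ _ _ (fun b _ => DifferentiableAt.fun_sum fun c _ =>
        ((hd1 b c).const_mul (eps a' b c)))]
    refine Finset.sum_congr rfl fun b _ => ?_
    rw [pd_sum' _ _ _ _ (fun c _ => (hd1 b c).const_mul (eps a' b c))]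
    refine Finset.sum_congr rfl fun c _ => ?_
    rw [pd_const_mul' _ _ _ _ (hd1 b c),
      pd_sum' _ _ _ _ (fun k _ => ((hσd b k).fun_mul (hHd k c)).differentiableAt)]
    congr 1
    exact Finset.sum_congr rfl fun k _ => pd_mul' _ _ _ _ ((hσd b k) x) ((hHd k c) x)
  -- expansion of the divergence of 3·Hω
  have keyR : divV (fun y => (3 : ℝ) • (H y).mulVec (ω y)) x
      = 3 * ∑ a', ∑ b, (pd a' (fun y => H y a' b) x * ω x b
          + H x a' b * pd a' (fun y => ω y b) x) := by
    simp only [divV]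
    rw [Finset.mul_sum]
    refine Finset.sum_congr rfl fun a' _ => ?_
    have h1 : (fun y => ((3 : ℝ) • (H y).mulVec (ω y)) a')
        = fun y => 3 * ∑ b, H y a' b * ω y b := by
      funext y; simp [Matrix.mulVec, dotProduct]
    rw [h1, pd_const_mul' _ _ _ _ (DifferentiableAt.fun_sum fun b _ =>
        ((hHd a' b).fun_mul (hωd b)).differentiableAt),
      pd_sum' _ _ _ _ (fun b _ => ((hHd a' b).fun_mul (hωd b)).differentiableAt)]
    congr 1
    exact Finset.sum_congr rfl fun b _ => pd_mul' _ _ _ _ ((hHd a' b) x) ((hωd b) x)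
  -- the derivative of the first purely magnetic equation
  have E : divV (fun y => mcross (σ y) (H y)) x
      = divV (fun y => (3 : ℝ) • (H y).mulVec (ω y)) x := by
    have h1 : (fun y => mcross (σ y) (H y)) = fun y => (3 : ℝ) • (H y).mulVec (ω y) :=
      funext hbi1
    rw [h1]
  -- identification of the left-hand side
  have hL : divV (fun y => mcross (σ y) (H y)) x
      = frob (H x) (curlM σ x) - frob (σ x) (curlM H x) := by
    rw [keyL]
    simp [frob, curlM, eps, Fin.sum_univ_three]
    simp only [fH10, fH20, fH21, fσ10, fσ20, fσ21]
    simp only [eH10, eH20, eH21, eσ10, eσ20, eσ21]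
    ring
  -- identification of the right-hand side
  have hR : divV (fun y => (3 : ℝ) • (H y).mulVec (ω y)) x
      = 3 * dot3 (divM H x) (ω x) + 3 * frob (H x) (jac ω x) := by
    rw [keyR]
    simp only [dot3, divM, frob, jac, Fin.sum_univ_three]
    ring
  have hdiv : dot3 (divM H x) (ω x) = 0 := by
    rw [hbi2 x]; simp [dot3]
  have hvw : frob (σ x) (curlM H x) = -2 * frob (σ x) (vwedge (a x) (H x)) := by
    rw [hbi3 x]
    simp only [frob, Matrix.smul_apply, smul_eq_mul, Fin.sum_univ_three]
    ring
  have hvw2 : frob (σ x) (vwedge (a x) (H x)) = - dot3 (a x) (mcross (σ x) (H x)) := by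
    simp [frob, vwedge, dot3, mcross, Matrix.mul_apply, eps, Fin.sum_univ_three]
    simp only [eH10, eH20, eH21, eσ10, eσ20, eσ21]
    ring
  have hmc : dot3 (a x) (mcross (σ x) (H x)) = 3 * frob (H x) (tens (a x) (ω x)) := by
    rw [hbi1 x]
    simp only [dot3, frob, tens, Matrix.mulVec, dotProduct, Pi.smul_apply, smul_eq_mul,
      Fin.sum_univ_three]
    simp only [eH10, eH20, eH21]
    try ring
  have hPsplit : frob (H x) (jac ω x + (2 : ℝ) • tens (a x) (ω x))
      = frob (H x) (jac ω x) + 2 * frob (H x) (tens (a x) (ω x)) := by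
    simp only [frob, Matrix.add_apply, Matrix.smul_apply, smul_eq_mul, Fin.sum_univ_three]
    ring
  -- the Ricci identity contracted with H
  have hT : (H x * H x).trace = frob (H x) (H x) := by
    simp only [Matrix.trace, Matrix.diag, Matrix.mul_apply, frob, Fin.sum_univ_three]
    simp only [eH10, eH20, eH21]
    try ring
  have hRic2 : frob (H x) (H x)
      = frob (H x) (curlM σ x) + frob (H x) (jac ω x)
        + 2 * frob (H x) (tens (a x) (ω x)) := by
    calc frob (H x) (H x)
        = frob (H x) (curlM σ x + hat (jac ω x) + (2 : ℝ) • hat (tens (a x) (ω x))) := by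
          rw [← hRicci x]
      _ = frob (H x) (curlM σ x) + frob (H x) (jac ω x)
            + 2 * frob (H x) (tens (a x) (ω x)) := by
          simp [frob, hat, Matrix.add_apply, Matrix.sub_apply, Matrix.smul_apply,
            Matrix.transpose_apply, Matrix.one_apply, smul_eq_mul, Matrix.trace, Matrix.diag,
            Fin.sum_univ_three]
          simp only [eH10, eH20, eH21, eH22]
          ring
  constructor
  · linarith [E, hL, hR, hdiv, hvw, hvw2, hmc, hPsplit, hT, hRic2]
  · linarith [E, hL, hR, hdiv, hvw, hvw2, hmc, hPsplit, hT, hRic2]
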